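/- Let n ≥ 3 and d ≥ 1, let θ : Fin n → ℝ and p : Fin n × Fin n → [0,1], and consider the Bernoulli-Plackett-Luce model with edge indicators a_{ij}. Fix an index j, vectors x_1,…,x_n ∈ ℝ^d, real weights w_{ij} for i ≠ j, a vector b_j ∈ ℝ^d, and a symmetric positive definite matrix Σ_j ∈ ℝ^{d×d}. Let μ_j = b_j + Σ_{i ≠ j} a_{ij} w_{ij} x_i and let μ̄_j = b_j + Σ_{i ≠ j} E[a_{ij}] w_{ij} x_i. Then E[⟨Σ_j⁻¹(x_j − μ_j), x_j − μ_j⟩] = ⟨Σ_j⁻¹(x_j − μ̄_j), x_j − μ̄_j⟩ + Σ_{i ≠ j} E[a_{ij}](1 − E[a_{ij}]) w_{ij}² ⟨Σ_j⁻¹ x_i, x_i⟩ + Σ_{i ≠ j} Σ_{k ≠ j, k ≠ i} (E[a_{ij}] w_{ij})(E[a_{kj}] w_{kj}) · (exp(θ_j)/(exp(θ_i)+exp(θ_j)+exp(θ_k))) · ⟨Σ_j⁻¹ x_i, x_k⟩, where E[a_{ij}] = p_{ij} · exp(θ_i)/(exp(θ_i)+exp(θ_j)) and the expectation is over the Bernoulli-Plackett-Luce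 model. -/

import Mathlib

/-!
Conditioning on the item ranked first, a Plackett–Luce permutation of `n + 1` items is that item
followed by a Plackett–Luce permutation of the others. By induction this gives
`P(i ≻ j) = e^{θ_i} / (e^{θ_i} + e^{θ_j})` and the probability that both `i` and `k` precede `j`.
As the Bernoulli masks are independent of the permutation, these are the first and second moments
of the edge indicators. The quadratic form is bilinear in the affine vector `x_j - μ_j`, so its
expectation is its value at the mean plus the covariances `Cov(a_{ij}, a_{kj})` paired with
`⟨Σ_j⁻¹ x_i, x_k⟩`.
-/

open Finset

/-- The Plackett-Luce probability of a permutation `π` of `{1,…,n}` with logits `θ`. -/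
noncomputable def plackettLuce {n : ℕ} (θ : Fin n → ℝ) (π : Equiv.Perm (Fin n)) : ℝ :=
  ∏ k : Fin n,
    Real.exp (θ (π k)) / ∑ u ∈ Finset.univ.filter (fun u => k ≤ u), Real.exp (θ (π u))

/-- Joint probability of a `(permutation, edge mask)` sample under the
Bernoulli-Plackett-Luce model. -/
noncomputable def bplProb {n : ℕ} (θ : Fin n → ℝ) (p : Fin n → Fin n → ℝ)
    (ω : Equiv.Perm (Fin n) × (Fin n → Fin n → Bool)) : ℝ :=
  plackettLuce θ ω.1 * ∏ i : Fin n, ∏ j : Fin n, (if ω.2 i j then p i j else 1 - p i j)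

/-- The edge indicator `a_{ij} = b_{ij} · 1[π⁻¹(i) < π⁻¹(j)]`. -/
def bplEdge {n : ℕ} (i j : Fin n)
    (ω : Equiv.Perm (Fin n) × (Fin n → Fin n → Bool)) : ℝ :=
  if ω.2 i j ∧ ω.1.symm i < ω.1.symm j then 1 else 0

/-- The expected edge probability `E[a_{ij}] = p_{ij} · e^{θ_i}/(e^{θ_i}+e^{θ_j})`. -/
noncomputable def bplEdgeExp {n : ℕ} (θ : Fin n → ℝ) (p : Fin n → Fin n → ℝ)
    (i j : Fin n) : ℝ :=
  p i j * (Real.exp (θ i) / (Real.exp (θ i) + Real.exp (θ j)))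

open Equiv

section PlackettLuce

variable {n : ℕ}

/-- `Perm.decomposeFin.symm (p, e)` ranks `p` first, followed by `succSwap p ∘ e`. -/
def succSwap (p : Fin (n + 1)) (m : Fin n) : Fin (n + 1) := swap 0 p m.succ

lemma exists_succSwap_eq {p u : Fin (n + 1)} (hu : u ≠ p) : ∃ m, succSwap p m = u := by
  have h0 : swap 0 p u ≠ 0 := by
    rwa [Ne, swap_apply_eq_iff, swap_apply_left]
  obtain ⟨m, hm⟩ := Fin.exists_succ_eq.mpr h0
  exact ⟨m, by rw [succSwap, hm, swap_apply_self]⟩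

lemma decomposeFin_symm_symm_self (p : Fin (n + 1)) (e : Perm (Fin n)) :
    (Perm.decomposeFin.symm (p, e)).symm p = 0 := by
  rw [symm_apply_eq, Perm.decomposeFin_symm_apply_zero]

lemma decomposeFin_symm_symm_succSwap (p : Fin (n + 1)) (e : Perm (Fin n)) (m : Fin n) :
    (Perm.decomposeFin.symm (p, e)).symm (succSwap p m) = (e.symm m).succ := by
  rw [symm_apply_eq, Perm.decomposeFin_symm_apply_succ, apply_symm_apply, succSwap]

lemma decomposeFin_symm_symm_succSwap_lt_iff (p : Fin (n + 1)) (e : Perm (Fin n)) (u v : Fin n) :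
    (Perm.decomposeFin.symm (p, e)).symm (succSwap p u)
        < (Perm.decomposeFin.symm (p, e)).symm (succSwap p v) ↔ e.symm u < e.symm v := by
  rw [decomposeFin_symm_symm_succSwap, decomposeFin_symm_symm_succSwap, Fin.succ_lt_succ_iff]

lemma plackettLuce_decomposeFin_symm (θ : Fin (n + 1) → ℝ) (p : Fin (n + 1))
    (e : Perm (Fin n)) :
    plackettLuce θ (Perm.decomposeFin.symm (p, e))
      = Real.exp (θ p) / (∑ u, Real.exp (θ u)) * plackettLuce (θ ∘ succSwap p) e := by
  rw [plackettLuce, Fin.prod_univ_succ, plackettLuce]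
  congr 1
  · simp only [Fin.zero_le, filter_true, Perm.decomposeFin_symm_apply_zero]
    rw [Equiv.sum_comp (Perm.decomposeFin.symm (p, e)) (fun u => Real.exp (θ u))]
  · refine prod_congr rfl fun k _ => ?_
    simp only [filter_le_eq_Ici, Fin.sum_Ici_succ, Perm.decomposeFin_symm_apply_succ,
      Function.comp_apply, succSwap]

lemma sum_plackettLuce_mul (θ : Fin (n + 1) → ℝ) (f : Perm (Fin (n + 1)) → ℝ) :
    ∑ π, plackettLuce θ π * f π
      = ∑ p, Real.exp (θ p) / (∑ u, Real.exp (θ u))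
          * ∑ e, plackettLuce (θ ∘ succSwap p) e * f (Perm.decomposeFin.symm (p, e)) := by
  rw [← Perm.decomposeFin.symm.sum_comp, Fintype.sum_prod_type]
  simp only [plackettLuce_decomposeFin_symm, mul_sum, mul_assoc]

lemma sum_plackettLuce (θ : Fin n → ℝ) : ∑ π, plackettLuce θ π = 1 := by
  induction n with
  | zero => simp [plackettLuce]
  | succ n ih =>
    have h := sum_plackettLuce_mul θ 1
    simp only [Pi.one_apply, mul_one, ih] at h
    rw [h, ← sum_div, div_self (sum_pos (fun u _ => Real.exp_pos (θ u)) univ_nonempty).ne']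

lemma decomposeFin_symm_symm_self_lt (p : Fin (n + 1)) (e : Perm (Fin n)) {v : Fin (n + 1)}
    (hv : v ≠ p) :
    (Perm.decomposeFin.symm (p, e)).symm p < (Perm.decomposeFin.symm (p, e)).symm v := by
  rw [decomposeFin_symm_symm_self, Fin.pos_iff_ne_zero, Ne, symm_apply_eq,
    Perm.decomposeFin_symm_apply_zero]
  exact hv

lemma not_lt_decomposeFin_symm_symm_self (p : Fin (n + 1)) (e : Perm (Fin n)) (u : Fin (n + 1)) :
    ¬ (Perm.decomposeFin.symm (p, e)).symm u < (Perm.decomposeFin.symm (p, e)).symm p := by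
  rw [decomposeFin_symm_symm_self]
  exact Fin.not_lt_zero _

lemma sum_div_sum_mul_eq_of_forall_notMem {ι : Type*} [Fintype ι] (e c : ι → ℝ) (q : ℝ)
    (s : Finset ι) (he : ∑ u, e u ≠ 0) (hc : ∀ p ∉ s, c p = q)
    (hs : ∑ p ∈ s, e p * c p = (∑ p ∈ s, e p) * q) :
    ∑ p, e p / (∑ u, e u) * c p = q := by
  have hdev : ∑ p, e p * (c p - q) = 0 := by
    rw [← sum_subset (subset_univ s) fun p _ hp => by rw [hc p hp, sub_self, mul_zero]]
    simp only [mul_sub, sum_sub_distrib, hs, sum_mul, sub_self]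
  have hmean : ∑ p, e p * c p = (∑ p, e p) * q := by
    simp only [mul_sub, sum_sub_distrib, ← sum_mul] at hdev
    linarith
  simp_rw [div_mul_eq_mul_div, ← sum_div, hmean]
  field_simp

lemma sum_plackettLuce_mul_ite_lt (θ : Fin n → ℝ) {i j : Fin n} (hij : i ≠ j) :
    ∑ π, plackettLuce θ π * (if π.symm i < π.symm j then 1 else 0)
      = Real.exp (θ i) / (Real.exp (θ i) + Real.exp (θ j)) := by
  induction n with
  | zero => exact i.elim0
  | succ n ih =>
    rw [sum_plackettLuce_mul]
    refine sum_div_sum_mul_eq_of_forall_notMem _ _ _ {i, j}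
      (sum_pos (fun u _ => Real.exp_pos (θ u)) univ_nonempty).ne' ?_ ?_
    · intro p hp
      simp only [mem_insert, mem_singleton, not_or] at hp
      obtain ⟨i', rfl⟩ := exists_succSwap_eq (Ne.symm hp.1)
      obtain ⟨j', rfl⟩ := exists_succSwap_eq (Ne.symm hp.2)
      simp only [decomposeFin_symm_symm_succSwap_lt_iff]
      exact ih _ fun h => hij (congrArg _ h)
    · simp only [sum_pair hij, decomposeFin_symm_symm_self_lt _ _ hij.symm,
        not_lt_decomposeFin_symm_symm_self, if_true, if_false, mul_one, mul_zero,
        sum_plackettLuce, sum_const_zero, add_zero]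
      field_simp

lemma sum_plackettLuce_succSwap_mul_ite_lt (θ : Fin (n + 1) → ℝ) {p u v : Fin (n + 1)}
    (hu : u ≠ p) (hv : v ≠ p) (huv : u ≠ v) :
    ∑ e, plackettLuce (θ ∘ succSwap p) e
        * (if (Perm.decomposeFin.symm (p, e)).symm u < (Perm.decomposeFin.symm (p, e)).symm v
          then 1 else 0)
      = Real.exp (θ u) / (Real.exp (θ u) + Real.exp (θ v)) := by
  obtain ⟨u', rfl⟩ := exists_succSwap_eq hu
  obtain ⟨v', rfl⟩ := exists_succSwap_eq hv
  simp only [decomposeFin_symm_symm_succSwap_lt_iff]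
  exact sum_plackettLuce_mul_ite_lt _ fun h => huv (congrArg _ h)

lemma sum_plackettLuce_mul_ite_lt_and_lt (θ : Fin n → ℝ) {i j k : Fin n} (hij : i ≠ j)
    (hkj : k ≠ j) (hik : i ≠ k) :
    ∑ π, plackettLuce θ π * (if π.symm i < π.symm j ∧ π.symm k < π.symm j then 1 else 0)
      = Real.exp (θ i) / (Real.exp (θ i) + Real.exp (θ j))
        * (Real.exp (θ k) / (Real.exp (θ k) + Real.exp (θ j)))
        * (1 + Real.exp (θ j) / (Real.exp (θ i) + Real.exp (θ j) + Real.exp (θ k))) := by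
  induction n with
  | zero => exact i.elim0
  | succ n ih =>
    rw [sum_plackettLuce_mul]
    refine sum_div_sum_mul_eq_of_forall_notMem _ _ _ {i, j, k}
      (sum_pos (fun u _ => Real.exp_pos (θ u)) univ_nonempty).ne' ?_ ?_
    · intro p hp
      simp only [mem_insert, mem_singleton, not_or] at hp
      obtain ⟨i', rfl⟩ := exists_succSwap_eq (Ne.symm hp.1)
      obtain ⟨j', rfl⟩ := exists_succSwap_eq (Ne.symm hp.2.1)
      obtain ⟨k', rfl⟩ := exists_succSwap_eq (Ne.symm hp.2.2)
      simp only [decomposeFin_symm_symm_succSwap_lt_iff]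
      exact ih _ (fun h => hij (congrArg _ h)) (fun h => hkj (congrArg _ h))
        (fun h => hik (congrArg _ h))
    · have hi : i ∉ ({j, k} : Finset _) := by simp [hij, hik]
      simp only [sum_insert hi, sum_pair hkj.symm, decomposeFin_symm_symm_self_lt _ _ hij.symm,
        decomposeFin_symm_symm_self_lt _ _ hkj.symm, true_and, and_true,
        sum_plackettLuce_succSwap_mul_ite_lt θ hik.symm hij.symm hkj,
        sum_plackettLuce_succSwap_mul_ite_lt θ hik hkj.symm hij,
        not_lt_decomposeFin_symm_symm_self, false_and, if_false, mul_zero, sum_const_zero,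
        zero_add]
      field_simp
      ring

end PlackettLuce

section Bernoulli

variable {α β : Type*} [Fintype α] [Fintype β]

def bernoulliWeight (q : α → β → ℝ) (b : α → β → Bool) : ℝ :=
  ∏ a, ∏ c, if b a c then q a c else 1 - q a c

variable [DecidableEq α] [DecidableEq β]

lemma prod_finset_eq_prod_prod_ite {M : Type*} [CommMonoid M] (s : Finset (α × β))
    (f : α × β → M) :
    ∏ z ∈ s, f z = ∏ a, ∏ c, if (a, c) ∈ s then f (a, c) else 1 := by
  rw [← Fintype.prod_prod_type (fun z => if z ∈ s then f z else 1), prod_ite_mem, univ_inter]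

lemma sum_prod_prod_apply {R : Type*} [CommSemiring R] {γ : Type*} [Fintype γ]
    (g : α → β → γ → R) :
    ∑ b : α → β → γ, ∏ a, ∏ c, g a c (b a c) = ∏ a, ∏ c, ∑ x, g a c x := by
  simp_rw [Fintype.prod_sum]

lemma sum_bernoulliWeight_mul_prod_boole (q : α → β → ℝ) (s : Finset (α × β)) :
    ∑ b, bernoulliWeight q b * ∏ z ∈ s, (if b z.1 z.2 then 1 else 0) = ∏ z ∈ s, q z.1 z.2 := by
  let g a c (x : Bool) : ℝ :=
    (if x then q a c else 1 - q a c) * if (a, c) ∈ s then (if x then 1 else 0) else 1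
  have hfactor : ∀ b : α → β → Bool,
      bernoulliWeight q b * ∏ z ∈ s, (if b z.1 z.2 then 1 else 0) = ∏ a, ∏ c, g a c (b a c) := by
    intro b
    rw [bernoulliWeight, prod_finset_eq_prod_prod_ite s]
    simp only [g, ← prod_mul_distrib]
  have hcoord : ∀ a c, ∑ x, g a c x = if (a, c) ∈ s then q a c else 1 := by
    intro a c
    split_ifs <;> simp [g, *]
  simp_rw [hfactor]
  rw [sum_prod_prod_apply g, prod_finset_eq_prod_prod_ite s]
  simp_rw [hcoord]

end Bernoulli

section BernoulliPlackettLuce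

variable {n : ℕ} (θ : Fin n → ℝ) (p : Fin n → Fin n → ℝ)

lemma sum_bplProb_mul_mul (f : Perm (Fin n) → ℝ) (g : (Fin n → Fin n → Bool) → ℝ) :
    ∑ ω, bplProb θ p ω * (f ω.1 * g ω.2)
      = (∑ π, plackettLuce θ π * f π) * ∑ b, bernoulliWeight p b * g b := by
  rw [Fintype.sum_prod_type, sum_mul_sum]
  refine sum_congr rfl fun π _ => sum_congr rfl fun b _ => ?_
  rw [bplProb, bernoulliWeight]
  ring

lemma sum_bplProb : ∑ ω, bplProb θ p ω = 1 := by
  have h := sum_bplProb_mul_mul θ p 1 1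
  have hb := sum_bernoulliWeight_mul_prod_boole p ∅
  simp only [Pi.one_apply, mul_one, prod_empty] at h hb
  rw [h, sum_plackettLuce, hb, mul_one]

lemma bplEdge_eq (i j : Fin n) (ω : Perm (Fin n) × (Fin n → Fin n → Bool)) :
    bplEdge i j ω = (if ω.1.symm i < ω.1.symm j then 1 else 0)
      * ∏ z ∈ {(i, j)}, (if ω.2 z.1 z.2 then 1 else 0) := by
  rw [bplEdge, prod_singleton]
  split_ifs <;> simp_all

lemma bplEdge_mul_bplEdge {i k : Fin n} (hik : i ≠ k) (j : Fin n)
    (ω : Perm (Fin n) × (Fin n → Fin n → Bool)) :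
    bplEdge i j ω * bplEdge k j ω
      = (if ω.1.symm i < ω.1.symm j ∧ ω.1.symm k < ω.1.symm j then 1 else 0)
        * ∏ z ∈ {(i, j), (k, j)}, (if ω.2 z.1 z.2 then 1 else 0) := by
  rw [prod_pair (by simpa using hik)]
  unfold bplEdge
  split_ifs <;> simp_all

lemma bplEdge_mul_self (i j : Fin n) (ω : Perm (Fin n) × (Fin n → Fin n → Bool)) :
    bplEdge i j ω * bplEdge i j ω = bplEdge i j ω := by
  unfold bplEdge
  split_ifs <;> norm_num

lemma sum_bplProb_mul_bplEdge {i j : Fin n} (hij : i ≠ j) :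
    ∑ ω, bplProb θ p ω * bplEdge i j ω = bplEdgeExp θ p i j := by
  simp_rw [bplEdge_eq]
  rw [sum_bplProb_mul_mul θ p (fun π => if π.symm i < π.symm j then 1 else 0)
    (fun b => ∏ z ∈ {(i, j)}, if b z.1 z.2 then 1 else 0)]
  simp_rw [sum_plackettLuce_mul_ite_lt θ hij,
    sum_bernoulliWeight_mul_prod_boole, prod_singleton, bplEdgeExp, mul_comm]

lemma sum_bplProb_mul_bplEdge_mul_bplEdge {i j k : Fin n} (hij : i ≠ j) (hkj : k ≠ j)
    (hik : i ≠ k) :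
    ∑ ω, bplProb θ p ω * (bplEdge i j ω * bplEdge k j ω)
      = bplEdgeExp θ p i j * bplEdgeExp θ p k j
        * (1 + Real.exp (θ j) / (Real.exp (θ i) + Real.exp (θ j) + Real.exp (θ k))) := by
  simp_rw [bplEdge_mul_bplEdge hik]
  rw [sum_bplProb_mul_mul θ p
    (fun π => if π.symm i < π.symm j ∧ π.symm k < π.symm j then 1 else 0)
    (fun b => ∏ z ∈ {(i, j), (k, j)}, if b z.1 z.2 then 1 else 0)]
  simp_rw [sum_plackettLuce_mul_ite_lt_and_lt θ hij hkj hik, sum_bernoulliWeight_mul_prod_boole,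
    prod_pair (show (i, j) ≠ (k, j) by simpa using hik), bplEdgeExp]
  ring

lemma bplEdge_covariance {i j k : Fin n} (hij : i ≠ j) (hkj : k ≠ j) :
    ∑ ω, bplProb θ p ω * (bplEdge i j ω * bplEdge k j ω)
        - (∑ ω, bplProb θ p ω * bplEdge i j ω) * ∑ ω, bplProb θ p ω * bplEdge k j ω
      = if i = k then bplEdgeExp θ p i j * (1 - bplEdgeExp θ p i j)
        else bplEdgeExp θ p i j * bplEdgeExp θ p k j
          * (Real.exp (θ j) / (Real.exp (θ i) + Real.exp (θ j) + Real.exp (θ k))) := by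
  rw [sum_bplProb_mul_bplEdge θ p hij, sum_bplProb_mul_bplEdge θ p hkj]
  split_ifs with hik
  · subst hik
    simp only [bplEdge_mul_self, sum_bplProb_mul_bplEdge θ p hij]
    ring
  · rw [sum_bplProb_mul_bplEdge_mul_bplEdge θ p hij hkj hik]
    ring

end BernoulliPlackettLuce

section Expectation

variable {Ω ι V : Type*} [Fintype Ω] [AddCommGroup V] [Module ℝ V]

lemma bilin_sub_sum_smul (B : V →ₗ[ℝ] V →ₗ[ℝ] ℝ) (y : V) (s : Finset ι) (z : ι → V)
    (a : ι → ℝ) :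
    B (y - ∑ i ∈ s, a i • z i) (y - ∑ i ∈ s, a i • z i)
      = B y y - ∑ k ∈ s, a k * B y (z k) - ∑ i ∈ s, a i * B (z i) y
        + ∑ i ∈ s, ∑ k ∈ s, a i * a k * B (z i) (z k) := by
  have hquad : B (∑ i ∈ s, a i • z i) (∑ k ∈ s, a k • z k)
      = ∑ i ∈ s, ∑ k ∈ s, a i * a k * B (z i) (z k) := by
    simp only [map_sum, map_smul, LinearMap.sum_apply, LinearMap.smul_apply, smul_eq_mul, mul_sum]
    rw [sum_comm]
    exact sum_congr rfl fun i _ => sum_congr rfl fun k _ => by ring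
  rw [LinearMap.map_sub₂, map_sub, map_sub, hquad]
  simp only [map_sum, map_smul, LinearMap.sum_apply, LinearMap.smul_apply, smul_eq_mul]
  ring

lemma sum_mul_bilin_sub_sum_smul (P : Ω → ℝ) (hP : ∑ ω, P ω = 1) (B : V →ₗ[ℝ] V →ₗ[ℝ] ℝ)
    (y : V) (s : Finset ι) (z : ι → V) (c : ι → Ω → ℝ) :
    ∑ ω, P ω * B (y - ∑ i ∈ s, c i ω • z i) (y - ∑ i ∈ s, c i ω • z i)
      = B (y - ∑ i ∈ s, (∑ ω, P ω * c i ω) • z i) (y - ∑ i ∈ s, (∑ ω, P ω * c i ω) • z i)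
        + ∑ i ∈ s, ∑ k ∈ s, (∑ ω, P ω * (c i ω * c k ω)
            - (∑ ω, P ω * c i ω) * (∑ ω, P ω * c k ω)) * B (z i) (z k) := by
  have hlin : ∀ r : ι → ℝ,
      ∑ ω, P ω * ∑ k ∈ s, c k ω * r k = ∑ k ∈ s, (∑ ω, P ω * c k ω) * r k := by
    intro r
    simp only [mul_sum, sum_mul]
    rw [sum_comm]
    exact sum_congr rfl fun k _ => sum_congr rfl fun ω _ => by ring
  have hquad : ∀ r : ι → ι → ℝ,
      ∑ ω, P ω * ∑ i ∈ s, ∑ k ∈ s, c i ω * c k ω * r i k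
        = ∑ i ∈ s, ∑ k ∈ s, (∑ ω, P ω * (c i ω * c k ω)) * r i k := by
    intro r
    simp only [mul_sum, sum_mul]
    rw [sum_comm]
    refine sum_congr rfl fun i _ => ?_
    rw [sum_comm]
    exact sum_congr rfl fun k _ => sum_congr rfl fun ω _ => by ring
  simp only [bilin_sub_sum_smul, mul_add, mul_sub, sum_add_distrib, sum_sub_distrib, ← sum_mul,
    hP, one_mul, hlin, hquad, sub_mul]
  ring

end Expectation

lemma sum_sum_ite_eq_add {ι M : Type*} [DecidableEq ι] [AddCommMonoid M] (s : Finset ι)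
    (f : ι → M) (g : ι → ι → M) :
    ∑ i ∈ s, ∑ k ∈ s, (if i = k then f i else g i k)
      = ∑ i ∈ s, f i + ∑ i ∈ s, ∑ k ∈ s.erase i, g i k := by
  rw [← sum_add_distrib]
  refine sum_congr rfl fun i hi => ?_
  rw [← add_sum_erase _ _ hi, if_pos rfl]
  exact congrArg _ (sum_congr rfl fun k hk => if_neg (ne_of_mem_erase hk).symm)

lemma Matrix.sum_mulVec_mul_eq_toLinearMap₂'_flip {m : Type*} [Fintype m] [DecidableEq m]
    (M : Matrix m m ℝ) (u v : m → ℝ) :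
    ∑ t, M.mulVec u t * v t = (Matrix.toLinearMap₂' ℝ M).flip u v := by
  simp only [LinearMap.flip_apply, Matrix.toLinearMap₂'_apply', dotProduct, mul_comm]

theorem bpl_expected_quadratic_form_general {n d : ℕ}
    (θ : Fin n → ℝ) (p : Fin n → Fin n → ℝ)
    (j : Fin n) (x : Fin n → Fin d → ℝ) (w : Fin n → ℝ) (b : Fin d → ℝ)
    (S : Matrix (Fin d) (Fin d) ℝ) :
    (∑ ω : Equiv.Perm (Fin n) × (Fin n → Fin n → Bool),
        bplProb θ p ω *
          ∑ t : Fin d,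
            (S⁻¹.mulVec
              (fun s => x j s - (b s + ∑ i ∈ Finset.univ.erase j, bplEdge i j ω * w i * x i s))) t
            * (x j t - (b t + ∑ i ∈ Finset.univ.erase j, bplEdge i j ω * w i * x i t)))
      = (∑ t : Fin d,
            (S⁻¹.mulVec
              (fun s => x j s - (b s + ∑ i ∈ Finset.univ.erase j, bplEdgeExp θ p i j * w i * x i s))) t
            * (x j t - (b t + ∑ i ∈ Finset.univ.erase j, bplEdgeExp θ p i j * w i * x i t)))
        + (∑ i ∈ Finset.univ.erase j,
            bplEdgeExp θ p i j * (1 - bplEdgeExp θ p i j) * w i ^ 2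
              * ∑ t : Fin d, (S⁻¹.mulVec (x i)) t * x i t)
        + ∑ i ∈ Finset.univ.erase j, ∑ k ∈ (Finset.univ.erase j).erase i,
            (bplEdgeExp θ p i j * w i) * (bplEdgeExp θ p k j * w k)
              * (Real.exp (θ j) / (Real.exp (θ i) + Real.exp (θ j) + Real.exp (θ k)))
              * ∑ t : Fin d, (S⁻¹.mulVec (x i)) t * x k t := by
  simp only [Matrix.sum_mulVec_mul_eq_toLinearMap₂'_flip]
  set E := univ.erase j
  set B : (Fin d → ℝ) →ₗ[ℝ] (Fin d → ℝ) →ₗ[ℝ] ℝ := (Matrix.toLinearMap₂' ℝ S⁻¹).flip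
  have hvec : ∀ c : Fin n → ℝ, (fun s => x j s - (b s + ∑ i ∈ E, c i * w i * x i s))
      = x j - b - ∑ i ∈ E, c i • w i • x i := fun c => by
    ext s
    simp only [Pi.sub_apply, Finset.sum_apply, Pi.smul_apply, smul_eq_mul, sub_add_eq_sub_sub,
      mul_assoc]
  have hmean : ∀ i ∈ E, ∑ ω, bplProb θ p ω * bplEdge i j ω = bplEdgeExp θ p i j :=
    fun i hi => sum_bplProb_mul_bplEdge θ p (ne_of_mem_erase hi)
  have hcov : ∀ i ∈ E, ∀ k ∈ E,
      (∑ ω, bplProb θ p ω * (bplEdge i j ω * bplEdge k j ω)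
          - (∑ ω, bplProb θ p ω * bplEdge i j ω) * ∑ ω, bplProb θ p ω * bplEdge k j ω)
          * B (w i • x i) (w k • x k)
        = if i = k then bplEdgeExp θ p i j * (1 - bplEdgeExp θ p i j) * w i ^ 2 * B (x i) (x i)
          else bplEdgeExp θ p i j * w i * (bplEdgeExp θ p k j * w k)
            * (Real.exp (θ j) / (Real.exp (θ i) + Real.exp (θ j) + Real.exp (θ k)))
            * B (x i) (x k) := by
    intro i hi k hk
    rw [bplEdge_covariance θ p (ne_of_mem_erase hi) (ne_of_mem_erase hk)]
    simp only [map_smul, LinearMap.smul_apply, smul_eq_mul]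
    split_ifs with hik
    · subst hik
      ring
    · ring
  simp only [hvec]
  rw [sum_mul_bilin_sub_sum_smul _ (sum_bplProb θ p) B (x j - b) E (fun i => w i • x i)
    (fun i => bplEdge i j), sum_congr rfl fun i hi => by rw [hmean i hi],
    sum_congr rfl fun i hi => sum_congr rfl fun k hk => hcov i hi k hk, sum_sum_ite_eq_add,
    add_assoc]

/-- Multivariate version: with `μ_j = b_j + Σ_{i ≠ j} a_{ij} w_{ij} x_i` and
`μ̄_j = b_j + Σ_{i ≠ j} E[a_{ij}] w_{ij} x_i`, the expectation (over the
Bernoulli-Plackett-Luce model) of the quadratic form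
`⟨Σ_j⁻¹(x_j − μ_j), x_j − μ_j⟩` equals
`⟨Σ_j⁻¹(x_j − μ̄_j), x_j − μ̄_j⟩ + Σ_{i≠j} E[a_{ij}](1−E[a_{ij}]) w_{ij}² ⟨Σ_j⁻¹ x_i, x_i⟩
 + Σ_{i≠j} Σ_{k≠j,k≠i} (E[a_{ij}] w_{ij})(E[a_{kj}] w_{kj})
     (e^{θ_j}/(e^{θ_i}+e^{θ_j}+e^{θ_k})) ⟨Σ_j⁻¹ x_i, x_k⟩`,
where `Σ_j` is a symmetric positive definite `d × d` matrix. -/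
theorem bpl_expected_quadratic_form {n d : ℕ} (hn : 3 ≤ n) (hd : 1 ≤ d)
    (θ : Fin n → ℝ) (p : Fin n → Fin n → ℝ) (hp : ∀ a b, 0 ≤ p a b ∧ p a b ≤ 1)
    (j : Fin n) (x : Fin n → Fin d → ℝ) (w : Fin n → ℝ) (b : Fin d → ℝ)
    (S : Matrix (Fin d) (Fin d) ℝ) (hS : S.PosDef) :
    (∑ ω : Equiv.Perm (Fin n) × (Fin n → Fin n → Bool),
        bplProb θ p ω *
          ∑ t : Fin d,
            (S⁻¹.mulVec
              (fun s => x j s - (b s + ∑ i ∈ Finset.univ.erase j, bplEdge i j ω * w i * x i s))) t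
            * (x j t - (b t + ∑ i ∈ Finset.univ.erase j, bplEdge i j ω * w i * x i t)))
      = (∑ t : Fin d,
            (S⁻¹.mulVec
              (fun s => x j s - (b s + ∑ i ∈ Finset.univ.erase j, bplEdgeExp θ p i j * w i * x i s))) t
            * (x j t - (b t + ∑ i ∈ Finset.univ.erase j, bplEdgeExp θ p i j * w i * x i t)))
        + (∑ i ∈ Finset.univ.erase j,
            bplEdgeExp θ p i j * (1 - bplEdgeExp θ p i j) * w i ^ 2
              * ∑ t : Fin d, (S⁻¹.mulVec (x i)) t * x i t)
        + ∑ i ∈ Finset.univ.erase j, ∑ k ∈ (Finset.univ.erase j).erase i,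
            (bplEdgeExp θ p i j * w i) * (bplEdgeExp θ p k j * w k)
              * (Real.exp (θ j) / (Real.exp (θ i) + Real.exp (θ j) + Real.exp (θ k)))
              * ∑ t : Fin d, (S⁻¹.mulVec (x i)) t * x k t :=
  bpl_expected_quadratic_form_general θ p j x w b S
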